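/- Let Y be a finite type and let W : Fin 2 → Y → ℝ be a binary-input channel: W u y ≥ 0 for all u, y, and Σ_{y ∈ Y} W u y = 1 for each u ∈ Fin 2. Define the minus-channel W⁻ : Fin 2 → (Y × Y) → ℝ by W⁻ u₁ (y₁, y₂) = (1/2) · Σ_{u₂ ∈ Fin 2} W (u₁ + u₂) y₁ · W u₂ y₂ (addition of inputs in Fin 2 = ZMod 2). Then the Bhattacharyya parameter satisfies Z(W⁻) ≤ 2·Z(W) − Z(W)², where Z(W) = Σ_{y ∈ Y} √(W 0 y · W 1 y) and Z(W⁻) = Σ_{(y₁,y₂)} √(W⁻ 0 (y₁,y₂) · W⁻ 1 (y₁,y₂)). -/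

import Mathlib

/-- The Bhattacharyya parameter of a binary-input channel kernel on a finite
output alphabet. -/
noncomputable def bhattacharyya {Y : Type*} [Fintype Y] (W : Fin 2 → Y → ℝ) : ℝ :=
  ∑ y : Y, Real.sqrt (W 0 y * W 1 y)

/-- Arıkan's minus-channel `W⁻ = W ⊞ W`, with output alphabet `Y × Y` and
`W⁻ u₁ (y₁, y₂) = (1/2) ⬝ Σ_{u₂} W (u₁ + u₂) y₁ ⬝ W u₂ y₂` (input addition mod 2). -/
noncomputable def minusChannel {Y : Type*} (W : Fin 2 → Y → ℝ) : Fin 2 → Y × Y → ℝ :=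
  fun u₁ p => (1 / 2) * ∑ u₂ : Fin 2, W (u₁ + u₂) p.1 * W u₂ p.2

/-!
At an output pair `(y₁, y₂)` put `A = W 0 y₁ + W 1 y₁`, `s = √(W 0 y₁ * W 1 y₁)` and likewise
`B`, `t` for `y₂`. Then `4 √(W⁻ 0 (y₁, y₂) * W⁻ 1 (y₁, y₂)) ≤ AB - (A - 2s)(B - 2t)`: both sides
are nonnegative and the difference of their squares is `8st(A - 2s)(B - 2t) ≥ 0`.
The bound has product form, so summing over `Y × Y` gives
`4 Z(W⁻) ≤ (ΣA)² - (ΣA - 2Z(W))²`, which is `8 Z(W) - 4 Z(W)²` for a channel, where `ΣA = 2`.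
-/

theorem two_mul_sqrt_mul_le {a b c d : ℝ} (ha : 0 ≤ a) (hb : 0 ≤ b) (hc : 0 ≤ c)
    (hd : 0 ≤ d) :
    2 * √((a * c + b * d) * (a * d + b * c)) ≤
      (a + b) * (c + d) - (a + b - 2 * √(a * b)) * (c + d - 2 * √(c * d)) := by
  set s := √(a * b)
  set t := √(c * d)
  have hs : 0 ≤ s := Real.sqrt_nonneg _
  have ht : 0 ≤ t := Real.sqrt_nonneg _
  have hs2 : s ^ 2 = a * b := Real.sq_sqrt (mul_nonneg ha hb)
  have ht2 : t ^ 2 = c * d := Real.sq_sqrt (mul_nonneg hc hd)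
  have hab : 0 ≤ a + b - 2 * s := by nlinarith [sq_nonneg (a - b)]
  have hcd : 0 ≤ c + d - 2 * t := by nlinarith [sq_nonneg (c - d)]
  set R := (a + b) * (c + d) - (a + b - 2 * s) * (c + d - 2 * t)
  have hR : 0 ≤ R := by nlinarith [mul_nonneg hs hcd, mul_nonneg ht hab, mul_nonneg hs ht]
  have hgap : R ^ 2 - (2 * √((a * c + b * d) * (a * d + b * c))) ^ 2 =
      8 * s * t * (a + b - 2 * s) * (c + d - 2 * t) := by
    rw [mul_pow, Real.sq_sqrt (by positivity)]
    linear_combination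
      (4 * (c + d) ^ 2 - 16 * c * d) * hs2 + (4 * (a + b) ^ 2 - 16 * s ^ 2) * ht2
  have hgap_nonneg : 0 ≤ 8 * s * t * (a + b - 2 * s) * (c + d - 2 * t) := by positivity
  exact le_of_pow_le_pow_left₀ two_ne_zero hR (by linarith)

theorem minusChannel_zero_mul_minusChannel_one {Y : Type*} (W : Fin 2 → Y → ℝ) (y : Y × Y) :
    minusChannel W 0 y * minusChannel W 1 y =
      (W 0 y.1 * W 0 y.2 + W 1 y.1 * W 1 y.2) * (W 0 y.1 * W 1 y.2 + W 1 y.1 * W 0 y.2) / 4 := by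
  simp only [minusChannel, Fin.sum_univ_two]
  simp only [add_zero, zero_add, show (1 + 1 : Fin 2) = 0 from rfl]
  ring

theorem four_mul_bhattacharyya_minusChannel_le {Y : Type*} [Fintype Y] {W : Fin 2 → Y → ℝ}
    (hW : ∀ u y, 0 ≤ W u y) :
    4 * bhattacharyya (minusChannel W) ≤
      (∑ y, (W 0 y + W 1 y)) ^ 2 - (∑ y, (W 0 y + W 1 y) - 2 * bhattacharyya W) ^ 2 := by
  set m : Y → ℝ := fun y ↦ W 0 y + W 1 y
  set g : Y → ℝ := fun y ↦ W 0 y + W 1 y - 2 * √(W 0 y * W 1 y)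
  have hg : ∑ y, g y = ∑ y, m y - 2 * bhattacharyya W := by
    simp only [g, m, bhattacharyya, Finset.sum_sub_distrib, Finset.mul_sum]
  have hpair (y : Y × Y) : 4 * √(minusChannel W 0 y * minusChannel W 1 y) ≤
      m y.1 * m y.2 - g y.1 * g y.2 := by
    rw [minusChannel_zero_mul_minusChannel_one, Real.sqrt_div' _ (by norm_num : (0:ℝ) ≤ 4),
      show √(4 : ℝ) = 2 by norm_num [show (4 : ℝ) = 2 ^ 2 by norm_num]]
    linarith [two_mul_sqrt_mul_le (hW 0 y.1) (hW 1 y.1) (hW 0 y.2) (hW 1 y.2)]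
  calc 4 * bhattacharyya (minusChannel W)
      = ∑ y : Y × Y, 4 * √(minusChannel W 0 y * minusChannel W 1 y) := Finset.mul_sum _ _ _
    _ ≤ ∑ y : Y × Y, (m y.1 * m y.2 - g y.1 * g y.2) := Finset.sum_le_sum fun y _ ↦ hpair y
    _ = (∑ y, m y) ^ 2 - (∑ y, g y) ^ 2 := by
      simp only [Fintype.sum_prod_type, sq, Finset.sum_mul_sum, Finset.sum_sub_distrib]
    _ = _ := by rw [hg]

/-- `Z(W⁻) ≤ 2 Z(W) − Z(W)²`. -/
theorem bhattacharyya_minusChannel_le {Y : Type*} [Fintype Y] (W : Fin 2 → Y → ℝ)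
    (hW : ∀ u y, 0 ≤ W u y) (hW1 : ∀ u : Fin 2, ∑ y : Y, W u y = 1) :
    bhattacharyya (minusChannel W) ≤
      2 * bhattacharyya W - (bhattacharyya W) ^ 2 := by
  have hmass : ∑ y, (W 0 y + W 1 y) = 2 := by
    rw [Finset.sum_add_distrib, hW1 0, hW1 1]; norm_num
  have h := four_mul_bhattacharyya_minusChannel_le hW
  rw [hmass] at h
  linarith
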